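/- Let f be a set of natural numbers, d > 0 a real constant, c > 0, α > −1, and suppose there is a constant C₀ > 0 such that |π_f(x) − d·∫_2^x dt/ln t| ≤ C₀·x·exp(−c·√(ln x)) for all x ≥ 2. Then there exist constants C > 0 and c' > 0 such that for all x ≥ 2: |∑_{p prime, p ≤ x, p ∈ f} p^α − d·∫_2^x t^α/ln t dt| ≤ C·x^{α+1}·exp(−c'·√(ln x)). -/

import Mathlib

/-!
Put `E(t) = π_f(t) - d Li(t)` with `Li(t) = ∫₂ᵗ ds / log s`. Abel summation gives
`∑_{p ≤ x} p^α = x^α π_f(x) - ∫₂ˣ α t^(α-1) π_f(t) dt`, and integration by parts gives the same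
formula for `∫₂ˣ t^α / log t dt` with `Li` in place of `π_f`. So the difference to be bounded is
`x^α E(x) - ∫₂ˣ α t^(α-1) E(t) dt`, and its boundary term is directly of the right size. In the
integral, with `β = (α + 1) / 2 > 0` and `c' = min(c, β √(log 2))`, the estimate
`exp(-c √(log t)) ≤ (x / t)^β exp(-c' √(log x))` for `2 ≤ t ≤ x` trades the decay at `t` for decay
at `x`, leaving `∫₂ˣ t^(β-1) dt ≤ x^β / β`.
-/

open Filter

/-- `primeCountIn f t` is the number of primes `p ≤ t` with `p ∈ f`. -/
noncomputable def primeCountIn (f : Set ℕ) (t : ℝ) : ℕ :=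
  {p : ℕ | p.Prime ∧ p ∈ f ∧ (p : ℝ) ≤ t}.ncard

open scoped Classical in
/-- `primeSumIn f g x` is the sum of `g p` over primes `p ≤ x` with `p ∈ f`. -/
noncomputable def primeSumIn (f : Set ℕ) (g : ℝ → ℝ) (x : ℝ) : ℝ :=
  ∑ p ∈ (Finset.range (⌊x⌋₊ + 1)).filter (fun p => p.Prime ∧ p ∈ f), g p

open Real Set MeasureTheory intervalIntegral

open scoped Classical in
noncomputable def primeIndicator (f : Set ℕ) (k : ℕ) : ℝ := if k.Prime ∧ k ∈ f then 1 else 0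

noncomputable def logIntegral (x : ℝ) : ℝ := ∫ t in (2 : ℝ)..x, 1 / log t

section PrimeSums

variable (f : Set ℕ)

theorem primeSumIn_eq_sum_mul_primeIndicator (g : ℝ → ℝ) (x : ℝ) :
    primeSumIn f g x = ∑ k ∈ Finset.Icc 0 ⌊x⌋₊, g k * primeIndicator f k := by
  simp only [primeSumIn, primeIndicator, Finset.sum_filter, mul_boole, Nat.range_succ_eq_Icc_zero]

open scoped Classical in
theorem primeCountIn_eq_sum_primeIndicator {t : ℝ} (ht : 0 ≤ t) :
    (primeCountIn f t : ℝ) = ∑ k ∈ Finset.Icc 0 ⌊t⌋₊, primeIndicator f k := by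
  have hset : {p : ℕ | p.Prime ∧ p ∈ f ∧ (p : ℝ) ≤ t} =
      ((Finset.Icc 0 ⌊t⌋₊).filter fun p => p.Prime ∧ p ∈ f : Finset ℕ) := by
    ext p
    simp only [Set.mem_ofPred_eq, Finset.coe_filter, Finset.mem_Icc, zero_le, true_and,
      Nat.le_floor_iff ht]
    tauto
  simp only [primeCountIn, hset, Set.ncard_coe_finset, primeIndicator, Finset.sum_boole]

theorem primeCountIn_mono : Monotone (fun t => (primeCountIn f t : ℝ)) := by
  intro s t hst
  refine Nat.cast_le.2 (Set.ncard_le_ncard (fun p hp => ⟨hp.1, hp.2.1, hp.2.2.trans hst⟩) ?_)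
  exact (Set.finite_Iic ⌊t⌋₊).subset fun p hp => Nat.le_floor hp.2.2

theorem primeSumIn_eq_sub_integral {g g' : ℝ → ℝ} {x : ℝ} (hx : 2 ≤ x)
    (hg : ∀ t ∈ Icc 2 x, HasDerivAt g (g' t) t) (hg' : ContinuousOn g' (Icc 2 x)) :
    primeSumIn f g x = g x * primeCountIn f x - ∫ t in (2 : ℝ)..x, g' t * primeCountIn f t := by
  have hderiv : EqOn (deriv g) g' (Icc 2 x) := fun t ht => (hg t ht).deriv
  have hzero : primeIndicator f 0 = 0 := by simp [primeIndicator, Nat.not_prime_zero]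
  have hone : primeIndicator f 1 = 0 := by simp [primeIndicator, Nat.not_prime_one]
  rw [primeSumIn_eq_sum_mul_primeIndicator, sum_mul_eq_sub_integral_mul₁ _ hzero hone x
    (fun t ht => (hg t ht).differentiableAt) (hg'.integrableOn_Icc.congr_fun hderiv.symm
    measurableSet_Icc), primeCountIn_eq_sum_primeIndicator f (by linarith),
    integral_of_le hx]
  congr 1
  refine setIntegral_congr_fun measurableSet_Ioc fun t ht => ?_
  rw [hderiv (Ioc_subset_Icc_self ht), primeCountIn_eq_sum_primeIndicator f (by linarith [ht.1])]

end PrimeSums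

theorem continuousOn_one_div_log : ContinuousOn (fun t => 1 / log t) (Ioi 1) := fun t ht =>
  (continuousAt_const.div (continuousAt_log (by linarith [mem_Ioi.1 ht]))
    (log_pos ht).ne').continuousWithinAt

theorem uIcc_two_subset_Ioi_one {x : ℝ} (hx : 1 < x) : uIcc 2 x ⊆ Ioi 1 := fun _ ht =>
  (lt_min one_lt_two hx).trans_le ht.1

theorem hasDerivAt_logIntegral {t : ℝ} (ht : 1 < t) : HasDerivAt logIntegral (1 / log t) t :=
  integral_hasDerivAt_right
    (continuousOn_one_div_log.mono (uIcc_two_subset_Ioi_one ht)).intervalIntegrable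
    (continuousOn_one_div_log.stronglyMeasurableAtFilter isOpen_Ioi t ht)
    (continuousOn_one_div_log.continuousAt (Ioi_mem_nhds ht))

theorem continuousOn_logIntegral : ContinuousOn logIntegral (Ioi 1) := fun _ ht =>
  (hasDerivAt_logIntegral ht).continuousAt.continuousWithinAt

theorem integral_div_log_eq_sub_integral {g g' : ℝ → ℝ} {x : ℝ} (hx : 1 < x)
    (hg : ∀ t ∈ uIcc 2 x, HasDerivAt g (g' t) t) (hg' : IntervalIntegrable g' volume 2 x) :
    ∫ t in (2 : ℝ)..x, g t / log t =
      g x * logIntegral x - ∫ t in (2 : ℝ)..x, g' t * logIntegral t := by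
  have hLi : ∀ t ∈ uIcc 2 x, HasDerivAt logIntegral (1 / log t) t := fun t ht =>
    hasDerivAt_logIntegral (uIcc_two_subset_Ioi_one hx ht)
  have hlog : IntervalIntegrable (fun t => 1 / log t) volume 2 x :=
    (continuousOn_one_div_log.mono (uIcc_two_subset_Ioi_one hx)).intervalIntegrable
  simp_rw [div_eq_mul_one_div (g _)]
  rw [integral_mul_deriv_eq_deriv_mul hg hLi hg' hlog, show logIntegral 2 = 0 from integral_same,
    mul_zero, sub_zero]

theorem primeSumIn_sub_integral_div_log_eq (f : Set ℕ) (d : ℝ) {g g' : ℝ → ℝ} {x : ℝ}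
    (hx : 2 ≤ x) (hg : ∀ t ∈ Icc 2 x, HasDerivAt g (g' t) t) (hg' : ContinuousOn g' (Icc 2 x)) :
    primeSumIn f g x - d * ∫ t in (2 : ℝ)..x, g t / log t =
      g x * (primeCountIn f x - d * logIntegral x) -
        ∫ t in (2 : ℝ)..x, g' t * (primeCountIn f t - d * logIntegral t) := by
  rw [primeSumIn_eq_sub_integral f hx hg hg']
  rw [← uIcc_of_le hx] at hg hg'
  have hLi : ContinuousOn logIntegral (uIcc 2 x) :=
    continuousOn_logIntegral.mono (uIcc_two_subset_Ioi_one (by linarith))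
  have hπ : IntervalIntegrable (fun t => g' t * primeCountIn f t) volume 2 x :=
    (primeCountIn_mono f).intervalIntegrable.continuousOn_mul hg'
  have hdLi : IntervalIntegrable (fun t => g' t * (d * logIntegral t)) volume 2 x :=
    (hg'.mul (continuousOn_const.mul hLi)).intervalIntegrable
  simp_rw [mul_sub]
  rw [integral_div_log_eq_sub_integral (by linarith) hg hg'.intervalIntegrable,
    integral_sub hπ hdLi]
  simp only [mul_left_comm (g' _) d, intervalIntegral.integral_const_mul]
  ring

theorem exp_neg_mul_sqrt_log_le {c c' β t x : ℝ} (hβ : 0 ≤ β) (hc' : c' ≤ c)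
    (hc'β : c' ≤ β * √(log 2)) (ht : 2 ≤ t) (htx : t ≤ x) :
    exp (-c * √(log t)) ≤ (x / t) ^ β * exp (-c' * √(log x)) := by
  have ht0 : 0 < t := by linarith
  have hx0 : 0 < x := by linarith
  rw [rpow_def_of_pos (div_pos hx0 ht0), ← exp_add, exp_le_exp, log_div hx0.ne' ht0.ne']
  set u := √(log t)
  set v := √(log x)
  have hu2 : u ^ 2 = log t := sq_sqrt (log_nonneg (by linarith))
  have hv2 : v ^ 2 = log x := sq_sqrt (log_nonneg (by linarith))
  have huv : u ≤ v := sqrt_le_sqrt (log_le_log ht0 htx)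
  have hu : √(log 2) ≤ u := sqrt_le_sqrt (log_le_log two_pos ht)
  have hc'uv : c' ≤ β * (v + u) := by nlinarith [sqrt_nonneg (log 2)]
  rw [← hu2, ← hv2]
  -- `c' v - c u ≤ c' (v - u) ≤ β (v + u) (v - u)`
  nlinarith [mul_nonneg (sub_nonneg.2 huv) (sub_nonneg.2 hc'uv),
    mul_nonneg (sub_nonneg.2 hc') (sqrt_nonneg (log t))]

theorem integral_rpow_le_rpow_div {a x r : ℝ} (ha : 0 ≤ a) (hr : -1 < r) :
    ∫ t in a..x, t ^ r ≤ x ^ (r + 1) / (r + 1) := by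
  rw [integral_rpow (Or.inl hr)]
  exact div_le_div_of_nonneg_right (sub_le_self _ (rpow_nonneg ha _)) (by linarith)

theorem abs_rpow_mul_sub_integral_le {E : ℝ → ℝ} {α c c' C₀ x : ℝ} (hα : -1 < α)
    (hC₀ : 0 ≤ C₀) (hc' : c' ≤ c) (hc'α : c' ≤ (α + 1) / 2 * √(log 2)) (hx : 2 ≤ x)
    (hE : ∀ t ∈ Icc 2 x, |E t| ≤ C₀ * t * exp (-c * √(log t))) :
    |x ^ α * E x - ∫ t in (2 : ℝ)..x, α * t ^ (α - 1) * E t| ≤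
      C₀ * (1 + 2 * |α| / (α + 1)) * x ^ (α + 1) * exp (-c' * √(log x)) := by
  set β := (α + 1) / 2
  set e := exp (-c' * √(log x))
  have hαβ : α + 1 = 2 * β := by simp only [β]; ring
  have hβ : 0 < β := by linarith
  have hx0 : 0 < x := by linarith
  have hxβ : x ^ β * x ^ β = x ^ (α + 1) := by rw [← rpow_add hx0, add_halves]
  have hboundary : |x ^ α * E x| ≤ C₀ * x ^ (α + 1) * e := by
    have he : exp (-c * √(log x)) ≤ e :=
      exp_le_exp.2 (mul_le_mul_of_nonneg_right (neg_le_neg hc') (sqrt_nonneg _))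
    calc |x ^ α * E x| = x ^ α * |E x| := by rw [abs_mul, abs_of_nonneg (by positivity)]
      _ ≤ x ^ α * (C₀ * x * e) := by
          gcongr
          exact (hE x ⟨hx, le_rfl⟩).trans (mul_le_mul_of_nonneg_left he (by positivity))
      _ = C₀ * x ^ (α + 1) * e := by rw [rpow_add_one hx0.ne']; ring
  have hpoint : ∀ t ∈ Icc 2 x, |α * t ^ (α - 1) * E t| ≤ |α| * C₀ * x ^ β * e * t ^ (β - 1) := by
    intro t ht
    have ht0 : 0 < t := by linarith [ht.1]
    calc |α * t ^ (α - 1) * E t| = |α| * t ^ (α - 1) * |E t| := by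
          rw [abs_mul, abs_mul, abs_of_nonneg (rpow_nonneg ht0.le _)]
      _ ≤ |α| * t ^ (α - 1) * (C₀ * t * ((x / t) ^ β * e)) := by
          gcongr
          exact (hE t ht).trans
            (by gcongr; exact exp_neg_mul_sqrt_log_le hβ.le hc' hc'α ht.1 ht.2)
      _ = |α| * C₀ * x ^ β * e * (t ^ (α - 1) * t / t ^ β) := by
          rw [div_rpow hx0.le ht0.le]
          ring
      _ = |α| * C₀ * x ^ β * e * t ^ (β - 1) := by
          rw [← rpow_add_one ht0.ne', show α - 1 + 1 = β + (β - 1) by linarith, rpow_add ht0,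
            mul_div_cancel_left₀ _ (rpow_pos_of_pos ht0 _).ne']
  have hintegral : |∫ t in (2 : ℝ)..x, α * t ^ (α - 1) * E t| ≤
      C₀ * (2 * |α| / (α + 1)) * x ^ (α + 1) * e := by
    have hint : IntervalIntegrable (fun t => |α| * C₀ * x ^ β * e * t ^ (β - 1)) volume 2 x :=
      (intervalIntegral.intervalIntegrable_rpow' (by linarith)).const_mul _
    calc |∫ t in (2 : ℝ)..x, α * t ^ (α - 1) * E t|
        ≤ ∫ t in (2 : ℝ)..x, |α| * C₀ * x ^ β * e * t ^ (β - 1) := by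
          rw [← norm_eq_abs]
          refine norm_integral_le_of_norm_le hx (ae_of_all _ fun t ht => ?_) hint
          exact (norm_eq_abs _).trans_le (hpoint t (Ioc_subset_Icc_self ht))
      _ ≤ |α| * C₀ * x ^ β * e * (x ^ (β - 1 + 1) / (β - 1 + 1)) := by
          rw [intervalIntegral.integral_const_mul]
          gcongr
          exact integral_rpow_le_rpow_div zero_le_two (by linarith)
      _ = C₀ * (2 * |α| / (α + 1)) * x ^ (α + 1) * e := by
          rw [sub_add_cancel, ← hxβ, hαβ]
          field_simp
  calc |x ^ α * E x - ∫ t in (2 : ℝ)..x, α * t ^ (α - 1) * E t|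
      ≤ |x ^ α * E x| + |∫ t in (2 : ℝ)..x, α * t ^ (α - 1) * E t| := abs_sub _ _
    _ ≤ C₀ * x ^ (α + 1) * e + C₀ * (2 * |α| / (α + 1)) * x ^ (α + 1) * e :=
        add_le_add hboundary hintegral
    _ = C₀ * (1 + 2 * |α| / (α + 1)) * x ^ (α + 1) * e := by ring

theorem stmt10_general (f : Set ℕ) (d : ℝ) (c : ℝ) (hc : 0 < c)
    (α : ℝ) (hα : -1 < α) (C₀ : ℝ) (hC₀ : 0 < C₀)
    (hpi : ∀ x : ℝ, 2 ≤ x →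
      |(primeCountIn f x : ℝ) - d * ∫ t in (2 : ℝ)..x, 1 / Real.log t| ≤
        C₀ * x * Real.exp (-c * Real.sqrt (Real.log x))) :
    ∃ C : ℝ, 0 < C ∧ ∃ c' : ℝ, 0 < c' ∧ ∀ x : ℝ, 2 ≤ x →
      |primeSumIn f (fun t => t ^ α) x -
          d * ∫ t in (2 : ℝ)..x, t ^ α / Real.log t| ≤
        C * x ^ (α + 1) * Real.exp (-c' * Real.sqrt (Real.log x)) := by
  have hα₁ : 0 < α + 1 := by linarith
  have hlog2 : 0 < √(log 2) := sqrt_pos.2 (log_pos one_lt_two)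
  refine ⟨C₀ * (1 + 2 * |α| / (α + 1)), by positivity, min c ((α + 1) / 2 * √(log 2)),
    lt_min hc (by positivity), fun x hx => ?_⟩
  have hne : ∀ t ∈ Icc 2 x, t ≠ 0 := fun t ht => (two_pos.trans_le ht.1).ne'
  rw [primeSumIn_sub_integral_div_log_eq f d hx
    (fun t ht => hasDerivAt_rpow_const (Or.inl (hne t ht)))
    (continuousOn_const.mul (continuousOn_id.rpow_const fun t ht => Or.inl (hne t ht)))]
  exact abs_rpow_mul_sub_integral_le hα hC₀.le (min_le_left _ _) (min_le_right _ _) hx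
    fun t ht => hpi t ht.1

theorem stmt10 (f : Set ℕ) (d : ℝ) (hd : 0 < d) (c : ℝ) (hc : 0 < c)
    (α : ℝ) (hα : -1 < α) (C₀ : ℝ) (hC₀ : 0 < C₀)
    (hpi : ∀ x : ℝ, 2 ≤ x →
      |(primeCountIn f x : ℝ) - d * ∫ t in (2 : ℝ)..x, 1 / Real.log t| ≤
        C₀ * x * Real.exp (-c * Real.sqrt (Real.log x))) :
    ∃ C : ℝ, 0 < C ∧ ∃ c' : ℝ, 0 < c' ∧ ∀ x : ℝ, 2 ≤ x →
      |primeSumIn f (fun t => t ^ α) x -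
          d * ∫ t in (2 : ℝ)..x, t ^ α / Real.log t| ≤
        C * x ^ (α + 1) * Real.exp (-c' * Real.sqrt (Real.log x)) :=
  stmt10_general f d c hc α hα C₀ hC₀ hpi
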